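/- Fix a nonzero vector u ∈ ℝ³ and define ρ_u(x) := |x|^{-4} (|u| + (x·u)/|x|) for x ≠ 0. Then ρ_u(x) ≥ 0 for all x ≠ 0, ρ_u(x) = O(|x|^{-4}) as |x| → ∞, and the limit as R → ∞ of ∫_{B_R(0) \ B_1(0)} ρ_u(x) x dV does not exist; in fact each component ∫_{B_R(0) \ B_1(0)} ρ_u(x) x_i dV with u_i ≠ 0 diverges to infinity (with the sign of u_i) as R → ∞. -/

import Mathlib

/-
In dimension `n` (here `n = 3`) the density is `ρ_u(x) = ‖x‖⁻⁽ⁿ⁺¹⁾ (‖u‖ + ⟪x, u⟫ / ‖x‖)`, so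
`ρ_u(x) x = ‖u‖ ‖x‖⁻⁽ⁿ⁺¹⁾ x + ‖x‖⁻⁽ⁿ⁺²⁾ ⟪x, u⟫ x`. On a radial set the first term integrates to
zero (it is odd under `x ↦ -x`), and the second moments `∫ g(‖x‖) xᵢ xₖ` form a multiple of the
identity (coordinate reflections kill the off-diagonal entries, coordinate swaps equalise the
diagonal ones, and the trace is `∫ g(‖x‖) ‖x‖²`). Hence the integral of `ρ_u(x) x` over
`{1 ≤ ‖x‖ < R}` is `(u / n) ∫ ‖x‖⁻ⁿ`, which polar coordinates evaluate to `vol(B₁) log R • u`: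
its norm, and each component with `uᵢ ≠ 0`, diverge logarithmically.
-/

noncomputable section
open MeasureTheory Filter Metric Real

abbrev E3 := EuclideanSpace ℝ (Fin 3)

section Annulus

variable {E F : Type*} [NormedAddCommGroup E] [NormedAddCommGroup F]

theorem ball_diff_ball_eq_norm_preimage_Ico (r R : ℝ) :
    ball (0 : E) R \ ball 0 r = {x : E | ‖x‖ ∈ Set.Ico r R} := by
  ext x
  simp [and_comm]

theorem continuousOn_norm_zpow (m : ℤ) : ContinuousOn (fun x : E => ‖x‖ ^ m) {0}ᶜ :=
  (continuousOn_zpow₀ m).comp continuous_norm.continuousOn fun _ hx => norm_ne_zero_iff.2 hx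

theorem integrableOn_norm_preimage_Ico_of_continuousOn [ProperSpace E] [MeasurableSpace E]
    [OpensMeasurableSpace E] (μ : Measure E) [IsFiniteMeasureOnCompacts μ] {f : E → F}
    (hf : ContinuousOn f {0}ᶜ) {r : ℝ} (hr : 0 < r) (R : ℝ) :
    IntegrableOn f {x : E | ‖x‖ ∈ Set.Ico r R} μ := by
  have hK : IsCompact {x : E | ‖x‖ ∈ Set.Icc r R} :=
    (isCompact_closedBall 0 R).of_isClosed_subset (isClosed_Icc.preimage continuous_norm)
      fun x hx => mem_closedBall_zero_iff.2 hx.2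
  refine ((hf.mono fun x hx => ?_).integrableOn_compact hK).mono_set
    fun x hx => Set.Ico_subset_Icc_self hx
  exact norm_ne_zero_iff.1 (hr.trans_le hx.1).ne'

end Annulus

section Polar

variable {E : Type*} [NormedAddCommGroup E] [NormedSpace ℝ E] [FiniteDimensional ℝ E]
  [MeasurableSpace E] [BorelSpace E] (μ : Measure E) [μ.IsAddHaarMeasure]

theorem setIntegral_norm_zpow_neg_finrank [Nontrivial E] {R : ℝ} (hR : 1 ≤ R) :
    ∫ x in {x : E | ‖x‖ ∈ Set.Ico 1 R}, ‖x‖ ^ (-(Module.finrank ℝ E : ℤ)) ∂μ =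
      Module.finrank ℝ E * μ.real (ball 0 1) * log R := by
  set n := Module.finrank ℝ E
  have hn : 0 < n := Module.finrank_pos
  have hradial : {x : E | ‖x‖ ∈ Set.Ico 1 R}.indicator (fun x => ‖x‖ ^ (-(n : ℤ))) =
      fun x => (Set.Ico 1 R).indicator (fun r => r ^ (-(n : ℤ))) ‖x‖ :=
    funext fun x => Set.indicator_comp_right (fun x : E => ‖x‖) (g := fun r : ℝ => r ^ (-(n : ℤ)))
  have hmeas : MeasurableSet {x : E | ‖x‖ ∈ Set.Ico 1 R} := measurable_norm measurableSet_Ico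
  rw [← integral_indicator hmeas, hradial, integral_fun_norm_addHaar μ]
  have hradius : ∫ y in Set.Ioi (0 : ℝ), y ^ (n - 1) • (Set.Ico 1 R).indicator
      (fun r => r ^ (-(n : ℤ))) y = log R := by
    calc _ = ∫ y in Set.Ioi (0 : ℝ), (Set.Ico 1 R).indicator (fun r => r⁻¹) y := by
          refine setIntegral_congr_fun measurableSet_Ioi fun y (hy : 0 < y) => ?_
          by_cases hyR : y ∈ Set.Ico 1 R
          · simp only [Set.indicator_of_mem hyR, smul_eq_mul]
            rw [← zpow_natCast, ← zpow_add₀ hy.ne', ← zpow_neg_one]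
            congr 1
            omega
          · simp [Set.indicator_of_notMem hyR]
      _ = ∫ y in Set.Ico 1 R, y⁻¹ := by
          rw [integral_indicator measurableSet_Ico, Measure.restrict_restrict measurableSet_Ico,
            Set.inter_eq_left.2 fun y hy => Set.mem_Ioi.2 (one_pos.trans_le hy.1)]
      _ = ∫ y in (1 : ℝ)..R, y⁻¹ := by
          rw [intervalIntegral.integral_of_le hR, integral_Ico_eq_integral_Ioo,
            integral_Ioc_eq_integral_Ioo]
      _ = log R := by rw [integral_inv_of_pos one_pos (by linarith), div_one]
  rw [hradius, nsmul_eq_mul, smul_eq_mul, mul_assoc]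

end Polar

section RadialMoments

theorem setIntegral_norm_preimage_comp_linearIsometryEquiv {E F : Type*} [NormedAddCommGroup E]
    [InnerProductSpace ℝ E] [FiniteDimensional ℝ E] [MeasurableSpace E] [BorelSpace E]
    [NormedAddCommGroup F] [NormedSpace ℝ F] (e : E ≃ₗᵢ[ℝ] E) (f : E → F) (T : Set ℝ) :
    ∫ x in {x : E | ‖x‖ ∈ T}, f (e x) = ∫ x in {x : E | ‖x‖ ∈ T}, f x := by
  have hT : e ⁻¹' {x : E | ‖x‖ ∈ T} = {x : E | ‖x‖ ∈ T} := by
    ext x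
    simp
  rw [← e.measurePreserving.setIntegral_preimage_emb e.toHomeomorph.measurableEmbedding f, hT]

variable {ι : Type*} [Fintype ι]

def EuclideanSpace.reflectCoord [DecidableEq ι] (j : ι) :
    EuclideanSpace ℝ ι ≃ₗᵢ[ℝ] EuclideanSpace ℝ ι :=
  LinearIsometryEquiv.piLpCongrRight 2
    (fun k => if k = j then LinearIsometryEquiv.neg ℝ else LinearIsometryEquiv.refl ℝ ℝ)

theorem EuclideanSpace.reflectCoord_apply_self [DecidableEq ι] (j : ι)
    (x : EuclideanSpace ℝ ι) : reflectCoord j x j = -x j := by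
  simp [reflectCoord]

theorem EuclideanSpace.reflectCoord_apply_of_ne [DecidableEq ι] {j k : ι} (h : k ≠ j)
    (x : EuclideanSpace ℝ ι) : reflectCoord j x k = x k := by
  simp [reflectCoord, h]

def EuclideanSpace.swapCoords [DecidableEq ι] (j k : ι) :
    EuclideanSpace ℝ ι ≃ₗᵢ[ℝ] EuclideanSpace ℝ ι :=
  LinearIsometryEquiv.piLpCongrLeft 2 ℝ ℝ (Equiv.swap j k)

theorem EuclideanSpace.swapCoords_apply [DecidableEq ι] (j k m : ι) (x : EuclideanSpace ℝ ι) :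
    swapCoords j k x m = x (Equiv.swap j k m) := by
  simp [swapCoords, LinearIsometryEquiv.piLpCongrLeft_apply, Equiv.piCongrLeft'_apply]

variable (g : ℝ → ℝ) (T : Set ℝ)

theorem setIntegral_radial_mul_apply (i : ι) :
    ∫ x in {x : EuclideanSpace ℝ ι | ‖x‖ ∈ T}, g ‖x‖ * x i = 0 := by
  have h := setIntegral_norm_preimage_comp_linearIsometryEquiv (LinearIsometryEquiv.neg ℝ)
    (fun x : EuclideanSpace ℝ ι => g ‖x‖ * x i) T
  simp only [LinearIsometryEquiv.coe_neg, norm_neg, PiLp.neg_apply, mul_neg, integral_neg] at h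
  linarith

theorem setIntegral_radial_mul_apply_mul_apply_of_ne {i j : ι} (hij : i ≠ j) :
    ∫ x in {x : EuclideanSpace ℝ ι | ‖x‖ ∈ T}, g ‖x‖ * (x i * x j) = 0 := by
  classical
  have h := setIntegral_norm_preimage_comp_linearIsometryEquiv (EuclideanSpace.reflectCoord i)
    (fun x : EuclideanSpace ℝ ι => g ‖x‖ * (x i * x j)) T
  simp only [LinearIsometryEquiv.norm_map, EuclideanSpace.reflectCoord_apply_self,
    EuclideanSpace.reflectCoord_apply_of_ne hij.symm, neg_mul, mul_neg, integral_neg] at h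
  linarith

theorem setIntegral_radial_mul_apply_mul_self_eq (i j : ι) :
    ∫ x in {x : EuclideanSpace ℝ ι | ‖x‖ ∈ T}, g ‖x‖ * (x i * x i) =
      ∫ x in {x : EuclideanSpace ℝ ι | ‖x‖ ∈ T}, g ‖x‖ * (x j * x j) := by
  classical
  have h := setIntegral_norm_preimage_comp_linearIsometryEquiv (EuclideanSpace.swapCoords i j)
    (fun x : EuclideanSpace ℝ ι => g ‖x‖ * (x i * x i)) T
  simpa only [LinearIsometryEquiv.norm_map, EuclideanSpace.swapCoords_apply,
    Equiv.swap_apply_left] using h.symm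

variable {g T}

theorem MeasureTheory.IntegrableOn.radial_mul_apply_mul_apply
    (hg : IntegrableOn (fun x : EuclideanSpace ℝ ι => g ‖x‖ * ‖x‖ ^ 2) {x | ‖x‖ ∈ T})
    (i j : ι) :
    IntegrableOn (fun x : EuclideanSpace ℝ ι => g ‖x‖ * (x i * x j)) {x | ‖x‖ ∈ T} := by
  have hfactor : ∀ x : EuclideanSpace ℝ ι,
      g ‖x‖ * (x i * x j) = x i * x j / ‖x‖ ^ 2 * (g ‖x‖ * ‖x‖ ^ 2) := by
    intro x
    rcases eq_or_ne x 0 with rfl | hx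
    · simp
    · field_simp
  simp only [hfactor]
  refine hg.bdd_mul (c := 1) (Measurable.aestronglyMeasurable (by fun_prop))
    (ae_of_all _ fun x => ?_)
  rw [norm_div, norm_mul, norm_pow, norm_norm, sq]
  exact div_le_one_of_le₀ (mul_le_mul (PiLp.norm_apply_le x i) (PiLp.norm_apply_le x j)
    (norm_nonneg _) (norm_nonneg _)) (by positivity)

theorem card_mul_setIntegral_radial_mul_apply_mul_self
    (hg : IntegrableOn (fun x : EuclideanSpace ℝ ι => g ‖x‖ * ‖x‖ ^ 2) {x | ‖x‖ ∈ T}) (i : ι) :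
    Fintype.card ι * ∫ x in {x : EuclideanSpace ℝ ι | ‖x‖ ∈ T}, g ‖x‖ * (x i * x i) =
      ∫ x in {x : EuclideanSpace ℝ ι | ‖x‖ ∈ T}, g ‖x‖ * ‖x‖ ^ 2 := by
  have hnorm : ∀ x : EuclideanSpace ℝ ι, ‖x‖ ^ 2 = ∑ k, x k * x k := fun x => by
    rw [EuclideanSpace.real_norm_sq_eq]
    simp only [sq]
  calc (Fintype.card ι : ℝ) * ∫ x in {x : EuclideanSpace ℝ ι | ‖x‖ ∈ T}, g ‖x‖ * (x i * x i)
      = ∑ k, ∫ x in {x : EuclideanSpace ℝ ι | ‖x‖ ∈ T}, g ‖x‖ * (x k * x k) := by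
        simp [setIntegral_radial_mul_apply_mul_self_eq g T _ i]
    _ = ∫ x in {x : EuclideanSpace ℝ ι | ‖x‖ ∈ T}, g ‖x‖ * ‖x‖ ^ 2 := by
        rw [← integral_finsetSum _ fun k _ => hg.radial_mul_apply_mul_apply k k]
        simp only [hnorm, Finset.mul_sum]

theorem setIntegral_radial_mul_apply_mul_inner
    (hg : IntegrableOn (fun x : EuclideanSpace ℝ ι => g ‖x‖ * ‖x‖ ^ 2) {x | ‖x‖ ∈ T})
    (i : ι) (a : EuclideanSpace ℝ ι) :
    ∫ x in {x : EuclideanSpace ℝ ι | ‖x‖ ∈ T}, g ‖x‖ * (x i * inner ℝ x a) =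
      a i / Fintype.card ι * ∫ x in {x : EuclideanSpace ℝ ι | ‖x‖ ∈ T}, g ‖x‖ * ‖x‖ ^ 2 := by
  have hexpand : ∀ x : EuclideanSpace ℝ ι,
      g ‖x‖ * (x i * inner ℝ x a) = ∑ k, a k * (g ‖x‖ * (x i * x k)) := fun x => by
    simp only [PiLp.inner_apply, RCLike.inner_apply, conj_trivial, Finset.mul_sum]
    exact Finset.sum_congr rfl fun k _ => by ring
  have : Nonempty ι := ⟨i⟩
  have hcard : (Fintype.card ι : ℝ) ≠ 0 := Nat.cast_ne_zero.2 Fintype.card_ne_zero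
  simp only [hexpand]
  rw [integral_finsetSum _ fun k _ => (hg.radial_mul_apply_mul_apply i k).const_mul _,
    Finset.sum_eq_single i (fun k _ hk => by
      rw [integral_const_mul, setIntegral_radial_mul_apply_mul_apply_of_ne g T (Ne.symm hk),
        mul_zero]) (by simp),
    integral_const_mul, ← card_mul_setIntegral_radial_mul_apply_mul_self hg i]
  field_simp

end RadialMoments

theorem abs_real_inner_div_norm_le {E : Type*} [NormedAddCommGroup E] [InnerProductSpace ℝ E]
    (x u : E) : |inner ℝ x u / ‖x‖| ≤ ‖u‖ := by
  rcases (norm_nonneg x).eq_or_lt with hx | hx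
  · simp [← hx]
  rw [abs_div, abs_norm, div_le_iff₀ hx, mul_comm]
  exact abs_real_inner_le_norm x u

section CriticalDensity

variable {ι : Type*} [Fintype ι]

/-- `ρ_u` in dimension `card ι`; since `0 ^ (-k) = 0` in Lean, it vanishes at `x = 0`. -/
def criticalDensity (u x : EuclideanSpace ℝ ι) : ℝ :=
  ‖x‖ ^ (-(Fintype.card ι + 1 : ℤ)) * (‖u‖ + inner ℝ x u / ‖x‖)

variable (u : EuclideanSpace ℝ ι)

theorem criticalDensity_nonneg (x : EuclideanSpace ℝ ι) : 0 ≤ criticalDensity u x :=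
  mul_nonneg (zpow_nonneg (norm_nonneg x) _)
    (neg_le_iff_add_nonneg'.1 (abs_le.1 (abs_real_inner_div_norm_le x u)).1)

theorem criticalDensity_le (x : EuclideanSpace ℝ ι) :
    criticalDensity u x ≤ 2 * ‖u‖ * ‖x‖ ^ (-(Fintype.card ι + 1 : ℤ)) := by
  rw [criticalDensity, mul_comm (2 * ‖u‖)]
  gcongr
  linarith [(abs_le.1 (abs_real_inner_div_norm_le x u)).2]

theorem continuousOn_criticalDensity : ContinuousOn (criticalDensity u) {0}ᶜ :=
  (continuousOn_norm_zpow _).mul (continuousOn_const.add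
    ((continuous_id.inner continuous_const).continuousOn.div continuous_norm.continuousOn
      fun _ hx => norm_ne_zero_iff.2 hx))

theorem criticalDensity_mul_apply {x : EuclideanSpace ℝ ι} (hx : x ≠ 0) (i : ι) :
    criticalDensity u x * x i = ‖u‖ * (‖x‖ ^ (-(Fintype.card ι + 1 : ℤ)) * x i) +
      ‖x‖ ^ (-(Fintype.card ι + 2 : ℤ)) * (x i * inner ℝ x u) := by
  have hx' : ‖x‖ ≠ 0 := norm_ne_zero_iff.2 hx
  rw [criticalDensity, show (-(Fintype.card ι + 2 : ℤ)) = -(Fintype.card ι + 1) - 1 by ring,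
    zpow_sub_one₀ hx']
  field_simp

theorem setIntegral_Ico_criticalDensity_mul_apply {r : ℝ} (hr : 0 < r) (R : ℝ) (i : ι) :
    ∫ x in {x : EuclideanSpace ℝ ι | ‖x‖ ∈ Set.Ico r R}, criticalDensity u x * x i =
      u i / Fintype.card ι *
        ∫ x in {x : EuclideanSpace ℝ ι | ‖x‖ ∈ Set.Ico r R}, ‖x‖ ^ (-(Fintype.card ι : ℤ)) := by
  set s := {x : EuclideanSpace ℝ ι | ‖x‖ ∈ Set.Ico r R}
  have hs : MeasurableSet s := measurable_norm measurableSet_Ico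
  have hs0 : ∀ x ∈ s, x ≠ 0 := fun x hx => norm_ne_zero_iff.1 (hr.trans_le hx.1).ne'
  have hint {f : EuclideanSpace ℝ ι → ℝ} (hf : ContinuousOn f {0}ᶜ) : IntegrableOn f s :=
    integrableOn_norm_preimage_Ico_of_continuousOn volume hf hr R
  have hcoord : Continuous fun x : EuclideanSpace ℝ ι => x i := by fun_prop
  have hfirst := setIntegral_radial_mul_apply
    (fun r : ℝ => r ^ (-(Fintype.card ι + 1 : ℤ))) (Set.Ico r R) i
  have hsecond := setIntegral_radial_mul_apply_mul_inner
    (g := fun r : ℝ => r ^ (-(Fintype.card ι + 2 : ℤ))) (T := Set.Ico r R)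
    (hint ((continuousOn_norm_zpow _).mul (continuousOn_norm_zpow 2))) i u
  simp only at hfirst hsecond
  have htrace : ∫ x in s, ‖x‖ ^ (-(Fintype.card ι + 2 : ℤ)) * ‖x‖ ^ 2 =
      ∫ x in s, ‖x‖ ^ (-(Fintype.card ι : ℤ)) :=
    setIntegral_congr_fun hs fun x hx => by
      rw [← zpow_natCast, ← zpow_add₀ (norm_ne_zero_iff.2 (hs0 x hx))]
      congr 1
      push_cast
      ring
  have hint_first : IntegrableOn
      (fun x => ‖u‖ * (‖x‖ ^ (-(Fintype.card ι + 1 : ℤ)) * x i)) s :=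
    hint (((continuousOn_norm_zpow _).mul hcoord.continuousOn).const_mul _)
  have hint_second : IntegrableOn
      (fun x => ‖x‖ ^ (-(Fintype.card ι + 2 : ℤ)) * (x i * inner ℝ x u)) s :=
    hint ((continuousOn_norm_zpow _).mul (hcoord.continuousOn.mul
      (continuous_id.inner continuous_const).continuousOn))
  rw [setIntegral_congr_fun hs fun x hx => criticalDensity_mul_apply u (hs0 x hx) i,
    integral_add hint_first hint_second, integral_const_mul, hfirst, hsecond, htrace,
    mul_zero, zero_add]

variable {R : ℝ}

theorem setIntegral_ball_diff_ball_criticalDensity_mul_apply (hR : 1 ≤ R) (i : ι) :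
    ∫ x in ball 0 R \ ball 0 1, criticalDensity u x * x i =
      volume.real (ball (0 : EuclideanSpace ℝ ι) 1) * log R * u i := by
  have : Nonempty ι := ⟨i⟩
  have hcard : (Fintype.card ι : ℝ) ≠ 0 := Nat.cast_ne_zero.2 Fintype.card_ne_zero
  have hpolar := setIntegral_norm_zpow_neg_finrank volume hR (E := EuclideanSpace ℝ ι)
  rw [finrank_euclideanSpace] at hpolar
  rw [ball_diff_ball_eq_norm_preimage_Ico, setIntegral_Ico_criticalDensity_mul_apply u one_pos,
    hpolar]
  field_simp

theorem setIntegral_ball_diff_ball_criticalDensity_smul (hR : 1 ≤ R) :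
    ∫ x in ball 0 R \ ball 0 1, criticalDensity u x • x =
      (volume.real (ball (0 : EuclideanSpace ℝ ι) 1) * log R) • u := by
  have hint : IntegrableOn (fun x => criticalDensity u x • x) (ball 0 R \ ball 0 1) := by
    rw [ball_diff_ball_eq_norm_preimage_Ico]
    exact integrableOn_norm_preimage_Ico_of_continuousOn volume
      ((continuousOn_criticalDensity u).smul continuousOn_id) one_pos R
  ext i
  calc (∫ x in ball 0 R \ ball 0 1, criticalDensity u x • x) i
      = ∫ x in ball 0 R \ ball 0 1, criticalDensity u x * x i :=
        ((EuclideanSpace.proj i).integral_comp_comm hint).symm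
    _ = ((volume.real (ball (0 : EuclideanSpace ℝ ι) 1) * log R) • u) i :=
        setIntegral_ball_diff_ball_criticalDensity_mul_apply u hR i

end CriticalDensity

theorem stmt_3 (u : E3) (hu : u ≠ 0) :
    (∀ x : E3, x ≠ 0 → 0 ≤ ‖x‖ ^ (-4:ℤ) * (‖u‖ + (inner ℝ x u : ℝ) / ‖x‖)) ∧
    (∃ C : ℝ, 0 < C ∧ ∀ x : E3, 1 ≤ ‖x‖ →
      ‖x‖ ^ (-4:ℤ) * (‖u‖ + (inner ℝ x u : ℝ) / ‖x‖) ≤ C * ‖x‖ ^ (-4:ℤ)) ∧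
    (¬ ∃ c : E3, Tendsto (fun R : ℝ =>
        ∫ x in ball (0:E3) R \ ball (0:E3) 1,
          (‖x‖ ^ (-4:ℤ) * (‖u‖ + (inner ℝ x u : ℝ) / ‖x‖)) • x) atTop (nhds c)) ∧
    (∀ i : Fin 3, 0 < u i → Tendsto (fun R : ℝ =>
        ∫ x in ball (0:E3) R \ ball (0:E3) 1,
          ‖x‖ ^ (-4:ℤ) * (‖u‖ + (inner ℝ x u : ℝ) / ‖x‖) * x i) atTop atTop) ∧
    (∀ i : Fin 3, u i < 0 → Tendsto (fun R : ℝ =>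
        ∫ x in ball (0:E3) R \ ball (0:E3) 1,
          ‖x‖ ^ (-4:ℤ) * (‖u‖ + (inner ℝ x u : ℝ) / ‖x‖) * x i) atTop atBot) := by
  have hρ (x : E3) : ‖x‖ ^ (-4:ℤ) * (‖u‖ + (inner ℝ x u : ℝ) / ‖x‖) = criticalDensity u x := by
    norm_num [criticalDensity]
  simp only [hρ]
  have hlog : Tendsto (fun R => volume.real (ball (0 : E3) 1) * log R) atTop atTop :=
    tendsto_log_atTop.const_mul_atTop
      (ENNReal.toReal_pos (measure_ball_pos volume 0 one_pos).ne' measure_ball_lt_top.ne)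
  have hcomp (i : Fin 3) : (fun R => volume.real (ball (0 : E3) 1) * log R * u i) =ᶠ[atTop]
      fun R => ∫ x in ball (0:E3) R \ ball (0:E3) 1, criticalDensity u x * x i :=
    (eventually_ge_atTop 1).mono fun R hR =>
      (setIntegral_ball_diff_ball_criticalDensity_mul_apply u hR i).symm
  refine ⟨fun x _ => criticalDensity_nonneg u x,
    ⟨2 * ‖u‖, by positivity, fun x _ => (criticalDensity_le u x).trans_eq (by norm_num)⟩, ?_,
    fun i hi => (hlog.atTop_mul_const hi).congr' (hcomp i),
    fun i hi => ((tendsto_mul_const_atBot_of_neg hi).2 hlog).congr' (hcomp i)⟩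
  rintro ⟨c, hc⟩
  refine not_tendsto_atTop_of_tendsto_nhds hc.norm
    ((hlog.atTop_mul_const (norm_pos_iff.2 hu)).congr'
      ((eventually_ge_atTop 1).mono fun R hR => ?_))
  dsimp only
  rw [setIntegral_ball_diff_ball_criticalDensity_smul u hR, norm_smul,
    Real.norm_of_nonneg (mul_nonneg measureReal_nonneg (log_nonneg hR))]
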